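/- Let A be a commutative F_p-algebra, B an A-algebra, and ξ : B → B an A-linear map with ξ^p = 0. Then the coaction exp(ξε) : B → B ⊗ A[ε]/(ε^p) is an A-algebra homomorphism (equivalently, the α_p-action respects the algebra structure) if and only if ξ is an A-derivation of B. -/

import Mathlib

/-!
Comparing coefficients of `ε` in `exp(ξε)(x y) = exp(ξε)(x) · exp(ξε)(y)` and in
`exp(ξε)(1) = 1` gives the Leibniz rule and `ξ 1 = 0`. Conversely, for a derivation the
divided-power Leibniz rule `ξⁿ(x y)/n! = ∑_{i+j=n} (ξⁱx/i!)(ξʲy/j!)`, valid for `n < p` where `n!`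
is invertible, matches the coefficients of `εⁿ` for `n < p`, and the remaining terms of the
product carry `ε^(i+j) = 0`.
-/

open Polynomial TensorProduct

noncomputable section

/-- `A[ε] = A[x]/(x^p)`. -/
abbrev Aeps (p : ℕ) (A : Type*) [CommRing A] : Type _ :=
  AdjoinRoot ((X : A[X]) ^ p)

/-- The class of `x`, i.e. `ε`. -/
def eps (p : ℕ) (A : Type*) [CommRing A] : Aeps p A := AdjoinRoot.root _

/-- The inverse of `i!` in `A` (through `ℤ/p`). -/
def invFact (p : ℕ) (A : Type*) [CommRing A] [CharP A p] (i : ℕ) : A :=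
  ZMod.castHom (dvd_refl p) A ((i.factorial : ZMod p)⁻¹)

/-- The coaction `exp(ξ ε) : M → M ⊗ A[ε]/(ε^p)`, `m ↦ ∑ ξ^i(m)/i! ⊗ ε^i`. -/
def expCoact (p : ℕ) (A : Type*) [CommRing A] [CharP A p]
    {M : Type*} [AddCommGroup M] [Module A M] (ξ : Module.End A M) :
    M →ₗ[A] M ⊗[A] Aeps p A :=
  ∑ i ∈ Finset.range p,
    invFact p A i • ((TensorProduct.mk A M (Aeps p A)).flip ((eps p A) ^ i) ∘ₗ (ξ ^ i))

open Finset

theorem Module.End.pow_apply_mul_eq_sum_antidiagonal {R B : Type*} [CommSemiring R] [Semiring B]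
    [Algebra R B] (ξ : Module.End R B)
    (hξ : ∀ x y, ξ (x * y) = ξ x * y + x * ξ y) (n : ℕ) (x y : B) :
    (ξ ^ n) (x * y) =
      ∑ ij ∈ antidiagonal n, n.choose ij.1 • ((ξ ^ ij.1) x * (ξ ^ ij.2) y) := by
  induction n with
  | zero => simp
  | succ n ih =>
    rw [sum_antidiagonal_choose_succ_nsmul (fun i j ↦ (ξ ^ i) x * (ξ ^ j) y) n]
    simp only [pow_succ', Module.End.mul_apply, ih, map_sum, map_nsmul, hξ, nsmul_add,
      sum_add_distrib]
    rw [add_comm]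
    congr 1
    refine sum_congr rfl fun ij hij ↦ ?_
    rw [Nat.choose_symm_of_eq_add (mem_antidiagonal.1 hij).symm]

theorem Finset.sum_range_sum_range_eq_sum_antidiagonal {N : Type*} [AddCommMonoid N] (p : ℕ)
    (g : ℕ → ℕ → N) (hg : ∀ i j, p ≤ i + j → g i j = 0) :
    ∑ i ∈ range p, ∑ j ∈ range p, g i j =
      ∑ n ∈ range p, ∑ ij ∈ antidiagonal n, g ij.1 ij.2 := by
  have hfilter : ∑ ij ∈ range p ×ˢ range p with ij.1 + ij.2 < p, g ij.1 ij.2 =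
      ∑ ij ∈ range p ×ˢ range p, g ij.1 ij.2 :=
    sum_filter_of_ne fun ij _ hne ↦ not_le.1 fun h ↦ hne (hg _ _ h)
  have hfiber := sum_fiberwise_of_maps_to (s := {ij ∈ range p ×ˢ range p | ij.1 + ij.2 < p})
    (t := range p) (g := fun ij ↦ ij.1 + ij.2) (fun ij hij ↦ mem_range.2 (mem_filter.1 hij).2)
    fun ij ↦ g ij.1 ij.2
  rw [← sum_product', ← hfilter, ← hfiber]
  refine sum_congr rfl fun n hn ↦ sum_congr ?_ fun _ _ ↦ rfl
  ext ⟨i, j⟩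
  simp only [mem_filter, mem_product, mem_range, HasAntidiagonal.mem_antidiagonal] at hn ⊢
  omega

section Coefficients

variable (p : ℕ) (A : Type*) [CommRing A]

theorem eps_pow_eq_zero_of_le {n : ℕ} (h : p ≤ n) : eps p A ^ n = 0 := by
  have hε : eps p A ^ p = 0 := by rw [eps, ← AdjoinRoot.mk_X, ← map_pow, AdjoinRoot.mk_self]
  rw [← Nat.sub_add_cancel h, pow_add, hε, mul_zero]

def epsCoeff (k : ℕ) : Aeps p A →ₗ[A] A :=
  Polynomial.lcoeff A k ∘ₗ AdjoinRoot.modByMonicHom (monic_X_pow p)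

theorem epsCoeff_eps_pow [Nontrivial A] {j : ℕ} (hj : j < p) (k : ℕ) :
    epsCoeff p A k (eps p A ^ j) = if k = j then 1 else 0 := by
  have hmod : (X ^ j : A[X]) %ₘ X ^ p = X ^ j :=
    (modByMonic_eq_self_iff (monic_X_pow p)).2 (by simpa using hj)
  rw [epsCoeff, LinearMap.comp_apply, eps, ← AdjoinRoot.mk_X, ← map_pow,
    AdjoinRoot.modByMonicHom_mk, hmod, lcoeff_apply, coeff_X_pow]

variable {M : Type*} [AddCommGroup M] [Module A M]

def tensorEpsCoeff (k : ℕ) : M ⊗[A] Aeps p A →ₗ[A] M :=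
  (TensorProduct.rid A M).toLinearMap ∘ₗ (epsCoeff p A k).lTensor M

theorem tensorEpsCoeff_tmul_eps_pow [Nontrivial A] {j : ℕ} (hj : j < p) (k : ℕ) (m : M) :
    tensorEpsCoeff p A k (m ⊗ₜ[A] (eps p A ^ j)) = if k = j then m else 0 := by
  rw [tensorEpsCoeff, LinearMap.comp_apply, LinearMap.lTensor_tmul, epsCoeff_eps_pow p A hj]
  split_ifs <;> simp

theorem tensorEpsCoeff_sum_tmul_eps_pow [Nontrivial A] {k : ℕ} (hk : k < p) (b : ℕ → M) :
    tensorEpsCoeff p A k (∑ n ∈ range p, b n ⊗ₜ[A] (eps p A ^ n)) = b k := by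
  rw [map_sum, sum_congr rfl fun n hn ↦ tensorEpsCoeff_tmul_eps_pow p A (mem_range.1 hn) k (b n),
    sum_ite_eq, if_pos (mem_range.2 hk)]

end Coefficients

section InvFact

variable (p : ℕ) (A : Type*) [CommRing A] [CharP A p]

theorem invFact_zero : invFact p A 0 = 1 := by simp [invFact]

theorem invFact_one : invFact p A 1 = 1 := by simp [invFact]

theorem invFact_add_mul_choose [Fact p.Prime] {i j : ℕ} (hij : i + j < p) :
    invFact p A (i + j) * ((i + j).choose i : A) = invFact p A i * invFact p A j := by
  have hfact : ∀ {n}, n < p → ((n.factorial : ℕ) : ZMod p) ≠ 0 := fun hn ↦ by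
    rw [Ne, ZMod.natCast_eq_zero_iff, (Fact.out : p.Prime).dvd_factorial]
    omega
  have hZMod : ((i + j).factorial : ZMod p)⁻¹ * ((i + j).choose i : ℕ) =
      (i.factorial : ZMod p)⁻¹ * (j.factorial : ZMod p)⁻¹ := by
    have := hfact hij
    have := hfact (n := i) (by omega)
    have := hfact (n := j) (by omega)
    field_simp
    norm_cast
    rw [Nat.choose_symm_add, Nat.add_choose_mul_factorial_mul_factorial]
  simpa [invFact] using congrArg (ZMod.castHom (dvd_refl p) A) hZMod

end InvFact

section Coaction

variable (p : ℕ) (A : Type*) [CommRing A] [CharP A p]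

theorem expCoact_apply {M : Type*} [AddCommGroup M] [Module A M] (ξ : Module.End A M) (m : M) :
    expCoact p A ξ m = ∑ i ∈ range p, (invFact p A i • (ξ ^ i) m) ⊗ₜ[A] (eps p A ^ i) := by
  simp [expCoact, LinearMap.sum_apply, TensorProduct.smul_tmul']

theorem expCoact_apply_of_apply_eq_zero (hp : 0 < p) {M : Type*} [AddCommGroup M] [Module A M]
    (ξ : Module.End A M) {m : M} (hm : ξ m = 0) : expCoact p A ξ m = m ⊗ₜ[A] 1 := by
  rw [expCoact_apply, sum_eq_single_of_mem 0 (mem_range.2 hp)]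
  · simp [invFact_zero]
  · intro i _ hi
    rw [← Nat.succ_pred_eq_of_ne_zero hi, pow_succ, Module.End.mul_apply, hm, map_zero, smul_zero,
      zero_tmul]

theorem tensorEpsCoeff_expCoact [Nontrivial A] {M : Type*} [AddCommGroup M] [Module A M]
    (ξ : Module.End A M) {k : ℕ} (hk : k < p) (m : M) :
    tensorEpsCoeff p A k (expCoact p A ξ m) = invFact p A k • (ξ ^ k) m := by
  rw [expCoact_apply, tensorEpsCoeff_sum_tmul_eps_pow p A hk]

variable {B : Type*} [Ring B] [Algebra A B] (ξ : Module.End A B)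

theorem expCoact_mul_expCoact (x y : B) :
    expCoact p A ξ x * expCoact p A ξ y =
      ∑ n ∈ range p,
        (∑ ij ∈ antidiagonal n,
          (invFact p A ij.1 * invFact p A ij.2) • ((ξ ^ ij.1) x * (ξ ^ ij.2) y)) ⊗ₜ[A]
            (eps p A ^ n) := by
  simp only [expCoact_apply, sum_mul_sum, Algebra.TensorProduct.tmul_mul_tmul, smul_mul_smul_comm,
    ← pow_add]
  rw [sum_range_sum_range_eq_sum_antidiagonal p _ fun i j h ↦ by
    rw [eps_pow_eq_zero_of_le p A h, tmul_zero]]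
  refine sum_congr rfl fun n _ ↦ ?_
  rw [sum_tmul]
  refine sum_congr rfl fun ij hij ↦ ?_
  rw [HasAntidiagonal.mem_antidiagonal.1 hij]

theorem invFact_smul_pow_apply_mul [Fact p.Prime] (hξ : ∀ x y, ξ (x * y) = ξ x * y + x * ξ y)
    {n : ℕ} (hn : n < p) (x y : B) :
    invFact p A n • (ξ ^ n) (x * y) =
      ∑ ij ∈ antidiagonal n,
        (invFact p A ij.1 * invFact p A ij.2) • ((ξ ^ ij.1) x * (ξ ^ ij.2) y) := by
  rw [ξ.pow_apply_mul_eq_sum_antidiagonal hξ, smul_sum]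
  refine sum_congr rfl fun ij hij ↦ ?_
  obtain rfl := HasAntidiagonal.mem_antidiagonal.1 hij
  rw [← Nat.cast_smul_eq_nsmul A, smul_smul, invFact_add_mul_choose p A hn]

theorem expCoact_mul_of_leibniz [Fact p.Prime] (hξ : ∀ x y, ξ (x * y) = ξ x * y + x * ξ y)
    (x y : B) : expCoact p A ξ (x * y) = expCoact p A ξ x * expCoact p A ξ y := by
  rw [expCoact_mul_expCoact, expCoact_apply]
  exact sum_congr rfl fun n hn ↦ by rw [invFact_smul_pow_apply_mul p A ξ hξ (mem_range.1 hn)]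

variable [Nontrivial A]

theorem apply_one_eq_zero_of_expCoact_one (hp : 1 < p) (h1 : expCoact p A ξ 1 = 1) :
    ξ 1 = 0 := by
  have h := congrArg (tensorEpsCoeff p A 1) h1
  rwa [tensorEpsCoeff_expCoact p A ξ hp, invFact_one, one_smul, pow_one,
    Algebra.TensorProduct.one_def, ← pow_zero (eps p A),
    tensorEpsCoeff_tmul_eps_pow p A (by omega), if_neg one_ne_zero] at h

theorem leibniz_of_expCoact_mul (hp : 1 < p)
    (hmul : ∀ x y, expCoact p A ξ (x * y) = expCoact p A ξ x * expCoact p A ξ y) (x y : B) :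
    ξ (x * y) = ξ x * y + x * ξ y := by
  have h := congrArg (tensorEpsCoeff p A 1) (hmul x y)
  rw [tensorEpsCoeff_expCoact p A ξ hp, expCoact_mul_expCoact,
    tensorEpsCoeff_sum_tmul_eps_pow p A hp] at h
  simpa [Finset.Nat.sum_antidiagonal_eq_sum_range_succ_mk, sum_range_succ, invFact_zero,
    invFact_one, add_comm] using h

end Coaction

theorem stmt10_general (p : ℕ) [Fact p.Prime] (A : Type*) [CommRing A] [CharP A p]
    (B : Type*) [CommRing B] [Algebra A B] (ξ : Module.End A B) :
    (expCoact p A ξ 1 = 1 ∧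
        ∀ x y : B, expCoact p A ξ (x * y) = expCoact p A ξ x * expCoact p A ξ y) ↔
      ((∀ a : A, ξ (algebraMap A B a) = 0) ∧
        ∀ x y : B, ξ (x * y) = ξ x * y + x * ξ y) := by
  have hp : 1 < p := (Fact.out : p.Prime).one_lt
  have : Nontrivial A := CharP.nontrivial_of_char_ne_one hp.ne'
  constructor
  · rintro ⟨h1, hmul⟩
    have hξ1 := apply_one_eq_zero_of_expCoact_one p A ξ hp h1
    refine ⟨fun a ↦ ?_, leibniz_of_expCoact_mul p A ξ hp hmul⟩
    rw [Algebra.algebraMap_eq_smul_one, map_smul, hξ1, smul_zero]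
  · rintro ⟨hA, hξ⟩
    have hξ1 : ξ 1 = 0 := by simpa using hA 1
    rw [expCoact_apply_of_apply_eq_zero p A (by omega) ξ hξ1, ← Algebra.TensorProduct.one_def]
    exact ⟨rfl, expCoact_mul_of_leibniz p A ξ hξ⟩

/-- For a commutative `A`-algebra `B` and a `p`-nilpotent `A`-linear `ξ : B → B`, the
coaction `exp(ξε) : B → B ⊗ A[ε]/(ε^p)` is an `A`-algebra homomorphism (unital and
multiplicative) iff `ξ` is an `A`-derivation of `B`. -/
theorem stmt10 (p : ℕ) [Fact p.Prime] (A : Type*) [CommRing A] [CharP A p]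
    (B : Type*) [CommRing B] [Algebra A B] (ξ : Module.End A B) (hξ : ξ ^ p = 0) :
    (expCoact p A ξ 1 = 1 ∧
        ∀ x y : B, expCoact p A ξ (x * y) = expCoact p A ξ x * expCoact p A ξ y) ↔
      ((∀ a : A, ξ (algebraMap A B a) = 0) ∧
        ∀ x y : B, ξ (x * y) = ξ x * y + x * ξ y) :=
  stmt10_general p A B ξ

end
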